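/- The antipode intertwines the two modular automorphisms: σ(S(σ'(a))) = S(a) for every a ∈ A. -/

import Mathlib

open HopfAlgebra

/-! Both sides are detected by `φ (S c * ·)`, and the chain
`φ (S c * σ (S (σ' a))) = φ (S (σ' a) * S c) = φ (S (c * σ' a)) = φ (S (a * c)) = φ (S c * S a)`
only uses the two modular properties and the anti-multiplicativity of `S`; faithfulness of `φ` and
surjectivity of `S` then conclude. -/

lemma eq_of_forall_map_mul_eq {R A : Type*} [CommRing R] [Ring A] [Module R A]
    (φ : A →ₗ[R] R) (hφ : ∀ a : A, (∀ b : A, φ (b * a) = 0) → a = 0) {x y : A}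
    (h : ∀ b : A, φ (b * x) = φ (b * y)) : x = y :=
  sub_eq_zero.mp <| hφ _ fun b => by rw [mul_sub, map_sub, h, sub_self]

lemma map_antipode_mul_modular_eq {R A : Type*} [CommSemiring R] [Semiring A] [HopfAlgebra R A]
    (φ : A →ₗ[R] R) (σ σ' : A → A) (hσ : ∀ a b : A, φ (a * b) = φ (b * σ a))
    (hσ' : ∀ a b : A, φ (antipode R (a * b)) = φ (antipode R (b * σ' a))) (a c : A) :
    φ (antipode R c * σ (antipode R (σ' a))) = φ (antipode R c * antipode R a) := by
  rw [← hσ, ← antipode_mul_antidistrib, ← hσ', antipode_mul_antidistrib]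

theorem antipode_intertwines_modular_automorphisms
    {A : Type*} [Ring A] [HopfAlgebra ℂ A]
    (hS : Function.Bijective (antipode (R := ℂ) (A := A)))
    (φ : A →ₗ[ℂ] ℂ)
    (hφf2 : ∀ a : A, (∀ b : A, φ (b * a) = 0) → a = 0)
    (σ : A ≃ₐ[ℂ] A) (hσ : ∀ a b : A, φ (a * b) = φ (b * σ a))
    (σ' : A ≃ₐ[ℂ] A)
    (hσ' : ∀ a b : A, φ (antipode (R := ℂ) (a * b)) = φ (antipode (R := ℂ) (b * σ' a))) :
    ∀ a : A, σ (antipode (R := ℂ) (σ' a)) = antipode (R := ℂ) a := by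
  intro a
  refine eq_of_forall_map_mul_eq φ hφf2 fun b => ?_
  obtain ⟨c, rfl⟩ := hS.surjective b
  exact map_antipode_mul_modular_eq φ σ σ' hσ hσ' a c
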